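/- arXiv:2110.08922 — 5 statements merged into one kernel-verified Lean document; each statement's English description precedes it below -/
import Mathlib

section
/- For binary classification, if at a fixed input x the random hypothesis h predicts class 0 with probability q, and the probability that the true label Y equals 0 (conditioned on this confidence level) is exactly q (calibration), then the expected 0-1 error of a random hypothesis at such points equals q(1-q) + (1-q)q = 2q(1-q), which equals the expected disagreement rate of two independent hypotheses at such points. -/
/-!
Writing `A = {f = false}`, the points of `H × Bool` where `f` disagrees with the label split into
`A × {true}` and `Aᶜ × {false}`, and the disagreeing pairs of hypotheses into `A × Aᶜ` and
`Aᶜ × A`. Under independence both measures are therefore `q (1 - q) + (1 - q) q`: calibration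
makes the label behave like a second, independent hypothesis.
-/

open MeasureTheory
open scoped ENNReal NNReal

namespace Bool

theorem setOf_ne_eq_union_prod {α β : Type*} (f : α → Bool) (g : β → Bool) :
    {p : α × β | f p.1 ≠ g p.2} =
      (f ⁻¹' {false}) ×ˢ (g ⁻¹' {true}) ∪ (f ⁻¹' {true}) ×ˢ (g ⁻¹' {false}) := by
  ext ⟨a, b⟩
  simp only [Set.mem_ofPred_eq, Set.mem_union, Set.mem_prod, Set.mem_preimage,
    Set.mem_singleton_iff]
  cases f a <;> cases g b <;> decide

end Bool

section

variable {α β : Type*} [MeasurableSpace α] [MeasurableSpace β]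

theorem measure_prod_setOf_ne {μ : Measure α} {ν : Measure β} [SFinite ν]
    {f : α → Bool} {g : β → Bool} (hf : Measurable f) (hg : Measurable g) :
    μ.prod ν {p : α × β | f p.1 ≠ g p.2} =
      μ (f ⁻¹' {false}) * ν (g ⁻¹' {true}) + μ (f ⁻¹' {true}) * ν (g ⁻¹' {false}) := by
  have hdisj : Disjoint ((f ⁻¹' {false}) ×ˢ (g ⁻¹' {true})) ((f ⁻¹' {true}) ×ˢ (g ⁻¹' {false})) :=
    Set.disjoint_left.mpr fun p hp hp' => by simp_all
  rw [Bool.setOf_ne_eq_union_prod, measure_union hdisj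
    ((hf (measurableSet_singleton _)).prod (hg (measurableSet_singleton _))),
    Measure.prod_prod, Measure.prod_prod]

theorem measure_preimage_true_eq_one_sub {μ : Measure α} [IsProbabilityMeasure μ]
    {f : α → Bool} (hf : Measurable f) :
    μ (f ⁻¹' {true}) = 1 - μ (f ⁻¹' {false}) := by
  rw [← prob_compl_eq_one_sub (hf (measurableSet_singleton false)), ← Set.preimage_compl,
    Bool.compl_singleton, Bool.not_false]

end

theorem stmt_1_general {H : Type*} [MeasurableSpace H] (μ : Measure H) [IsProbabilityMeasure μ]
    (f : H → Bool) (hf : Measurable f) (ν : Measure Bool) [IsProbabilityMeasure ν]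
    (q : ℝ≥0∞)
    (h0 : μ {h | f h = false} = q) (hy : ν {false} = q) :
    (μ.prod ν) {p : H × Bool | f p.1 ≠ p.2} = 2 * q * (1 - q) ∧
    (μ.prod ν) {p : H × Bool | f p.1 ≠ p.2} = (μ.prod μ) {p : H × H | f p.1 ≠ f p.2} := by
  have hμ : μ (f ⁻¹' {false}) = q := h0
  have hν : ν (id ⁻¹' {false}) = q := hy
  have error : (μ.prod ν) {p : H × Bool | f p.1 ≠ p.2} = q * (1 - q) + (1 - q) * q := by
    rw [show {p : H × Bool | f p.1 ≠ p.2} = {p | f p.1 ≠ id p.2} from rfl,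
      measure_prod_setOf_ne hf measurable_id, measure_preimage_true_eq_one_sub hf,
      measure_preimage_true_eq_one_sub measurable_id, hμ, hν]
  have disagreement : (μ.prod μ) {p : H × H | f p.1 ≠ f p.2} = q * (1 - q) + (1 - q) * q := by
    rw [measure_prod_setOf_ne hf hf, measure_preimage_true_eq_one_sub hf, hμ]
  exact ⟨error.trans (by ring), error.trans disagreement.symm⟩

/-- Binary classification at a fixed input with calibration at confidence level `q`:
if a random hypothesis predicts class 0 (`false`) with probability `q` and the true label
equals 0 with probability `q`, then the expected 0-1 error of a random hypothesis equals
`2q(1-q)`, which equals the expected disagreement rate of two independent hypotheses. -/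
theorem stmt_1 {H : Type*} [MeasurableSpace H] (μ : Measure H) [IsProbabilityMeasure μ]
    (f : H → Bool) (hf : Measurable f) (ν : Measure Bool) [IsProbabilityMeasure ν]
    (q : ℝ≥0∞) (hq : q ≤ 1)
    (h0 : μ {h | f h = false} = q) (hy : ν {false} = q) :
    (μ.prod ν) {p : H × Bool | f p.1 ≠ p.2} = 2 * q * (1 - q) ∧
    (μ.prod ν) {p : H × Bool | f p.1 ≠ p.2} = (μ.prod μ) {p : H × H | f p.1 ≠ f p.2} :=
  stmt_1_general μ f hf ν q h0 hy
end

section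
/- Let H be a distribution over hypotheses X → Fin 2 with ensemble h̃_0(x) = P_{h∼H}[h(x)=0], and let D be a distribution over X × Fin 2. If the ensemble satisfies class-wise calibration on D (for every q ∈ [0,1], conditioned on h̃_0(X)=q, the probability that Y=0 is q), then the Generalization Disagreement Equality holds: E_{h,h'∼H}[P_D(h(X)≠h'(X))] = E_{h∼H}[P_D(h(X)≠Y)]. -/
open MeasureTheory
open scoped ENNReal NNReal

/-! Conditioned on the ensemble confidence taking the value `q`, two independent hypotheses
disagree with probability `q(1 - q) + (1 - q)q`. By calibration, the level set carries label `0`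
with proportion `q`, where a single hypothesis errs with probability `1 - q`, and label `1` with
proportion `1 - q`, where it errs with probability `q`. So both sides are the same sum over the
finitely many level sets. -/

section BoolValued

variable {α : Type*} [MeasurableSpace α] (μ : Measure α) [IsProbabilityMeasure μ]
  {f : α → Bool}

theorem measure_eq_true_eq_one_sub (hf : Measurable f) :
    μ {a | f a = true} = 1 - μ {a | f a = false} := by
  change _ = 1 - μ (f ⁻¹' {false})
  rw [← prob_compl_eq_one_sub (hf (measurableSet_singleton false))]
  congr 1
  ext a
  simp

theorem prod_self_measure_ne (hf : Measurable f) :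
    (μ.prod μ) {p | f p.1 ≠ f p.2} =
      μ {a | f a = false} * (1 - μ {a | f a = false}) +
        (1 - μ {a | f a = false}) * μ {a | f a = false} := by
  have hF : MeasurableSet {a | f a = false} := hf (measurableSet_singleton false)
  have hT : MeasurableSet {a | f a = true} := hf (measurableSet_singleton true)
  have hsplit : {p : α × α | f p.1 ≠ f p.2} =
      {a | f a = false} ×ˢ {a | f a = true} ∪ {a | f a = true} ×ˢ {a | f a = false} := by
    ext ⟨a, b⟩
    cases ha : f a <;> cases hb : f b <;> simp [ha, hb]
  have hdisj : Disjoint ({a | f a = false} ×ˢ {a | f a = true})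
      ({a | f a = true} ×ˢ {a | f a = false}) :=
    Set.disjoint_left.2 fun p h h' => by simp_all
  rw [hsplit, measure_union hdisj (hT.prod hF), Measure.prod_prod, Measure.prod_prod,
    measure_eq_true_eq_one_sub μ hf]

end BoolValued

theorem measure_inter_compl_eq_of_measure_inter_eq {α : Type*} [MeasurableSpace α]
    {μ : Measure α} [IsFiniteMeasure μ] {A S : Set α} (hS : MeasurableSet S) {q : ℝ≥0∞}
    (h : μ (A ∩ S) = q * μ A) : μ (A ∩ Sᶜ) = (1 - q) * μ A := by
  rw [ENNReal.sub_mul fun _ _ => measure_ne_top μ A, one_mul, ← h, ← Set.sdiff_eq]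
  exact ENNReal.eq_sub_of_add_eq (measure_ne_top μ _)
    ((add_comm _ _).trans (measure_inter_add_sdiff A hS))

theorem MeasureTheory.SimpleFunc.setLIntegral_comp_eq_lintegral_mul {Ω β : Type*}
    [MeasurableSpace Ω] {D : Measure Ω} (s : SimpleFunc Ω β) {S : Set Ω} (w f : β → ℝ≥0∞)
    (hw : ∀ b, D (s ⁻¹' {b} ∩ S) = w b * D (s ⁻¹' {b})) :
    ∫⁻ ω in S, f (s ω) ∂D = ∫⁻ ω, w (s ω) * f (s ω) ∂D := by
  calc ∫⁻ ω in S, f (s ω) ∂D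
      = ∑ b ∈ s.range, f b * D (s ⁻¹' {b} ∩ S) := by
        simp_rw [← Measure.restrict_apply (s.measurableSet_fiber _), ← SimpleFunc.map_lintegral,
          ← SimpleFunc.lintegral_eq_lintegral, SimpleFunc.map_apply]
    _ = ∑ b ∈ s.range, (w b * f b) * D (s ⁻¹' {b}) := by
        refine Finset.sum_congr rfl fun b _ => ?_
        rw [hw, mul_left_comm, mul_assoc]
    _ = ∫⁻ ω, w (s ω) * f (s ω) ∂D := by
        rw [← SimpleFunc.map_lintegral (fun b => w b * f b), ← SimpleFunc.lintegral_eq_lintegral]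
        rfl

/-- Class-wise calibration implies the Generalization Disagreement Equality for binary
classification: if the ensemble confidence `h̃₀(X) = μ {g | g(X) = 0}` takes finitely many
values and for every confidence value `q` the probability that `Y = 0` on the level set
`{h̃₀(X) = q}` is `q` times the mass of the level set, then the expected disagreement rate
of two i.i.d. hypotheses equals the expected test error. -/
theorem stmt_5 {𝓗 X : Type*} [MeasurableSpace 𝓗] [MeasurableSpace X]
    (μ : Measure 𝓗) [IsProbabilityMeasure μ]
    (D : Measure (X × Bool)) [IsProbabilityMeasure D]
    (F : 𝓗 → X → Bool) (hF : Measurable fun p : 𝓗 × X => F p.1 p.2)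
    (hfin : (Set.range fun x => μ {g | F g x = false}).Finite)
    (hmeas : ∀ q : ℝ≥0∞, MeasurableSet {x : X | μ {g | F g x = false} = q})
    (hcal : ∀ q : ℝ≥0∞,
      D {p : X × Bool | μ {g | F g p.1 = false} = q ∧ p.2 = false} =
        q * D {p : X × Bool | μ {g | F g p.1 = false} = q}) :
    ((μ.prod μ).prod D) {s : (𝓗 × 𝓗) × X × Bool | F s.1.1 s.2.1 ≠ F s.1.2 s.2.1} =
      (μ.prod D) {s : 𝓗 × X × Bool | F s.1 s.2.1 ≠ s.2.2} := by
  let conf : SimpleFunc (X × Bool) ℝ≥0∞ :=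
    (SimpleFunc.mk (fun x => μ {g | F g x = false}) hmeas hfin).comp Prod.fst measurable_fst
  have hF_at (x : X) : Measurable fun g => F g x := hF.comp measurable_prodMk_right
  have hlabel : MeasurableSet {p : X × Bool | p.2 = false} :=
    measurable_snd (measurableSet_singleton false)
  have hcal_false (q : ℝ≥0∞) :
      D (conf ⁻¹' {q} ∩ {p | p.2 = false}) = q * D (conf ⁻¹' {q}) :=
    hcal q
  have hcal_true (q : ℝ≥0∞) :
      D (conf ⁻¹' {q} ∩ {p | p.2 = false}ᶜ) = (1 - q) * D (conf ⁻¹' {q}) :=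
    measure_inter_compl_eq_of_measure_inter_eq hlabel (hcal_false q)
  have disagreement : ((μ.prod μ).prod D) {s | F s.1.1 s.2.1 ≠ F s.1.2 s.2.1} =
      ∫⁻ p, conf p * (1 - conf p) + (1 - conf p) * conf p ∂D := by
    rw [Measure.prod_apply_symm (by measurability)]
    exact lintegral_congr fun p => prod_self_measure_ne μ (hF_at p.1)
  have error : (μ.prod D) {s | F s.1 s.2.1 ≠ s.2.2} =
      ∫⁻ p in {p | p.2 = false}, 1 - conf p ∂D + ∫⁻ p in {p | p.2 = false}ᶜ, conf p ∂D := by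
    rw [Measure.prod_apply_symm (by measurability), ← lintegral_add_compl _ hlabel]
    congr 1 <;> refine setLIntegral_congr_fun (by measurability) fun p hp => ?_
    · change μ {g | F g p.1 ≠ p.2} = 1 - μ {g | F g p.1 = false}
      rw [show p.2 = false from hp]
      simpa only [ne_eq, Bool.not_eq_false] using measure_eq_true_eq_one_sub μ (hF_at p.1)
    · change μ {g | F g p.1 ≠ p.2} = μ {g | F g p.1 = false}
      rw [show p.2 = true from Bool.not_eq_false _ ▸ hp]
      simp only [ne_eq, Bool.not_eq_true]
  rw [disagreement, error,
    conf.setLIntegral_comp_eq_lintegral_mul (fun q => q) (fun q => 1 - q) hcal_false,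
    conf.setLIntegral_comp_eq_lintegral_mul (fun q => 1 - q) (fun q => q) hcal_true,
    lintegral_add_left (by fun_prop)]
end

section
/- Let H be a distribution over hypotheses X → Fin K with ensemble h̃, and D a distribution over X × Fin K. Define the class-aggregated calibration error CACE(h̃) = Σ_q | Σ_k P(Y=k, h̃_k(X)=q) − q · Σ_k P(h̃_k(X)=q) | (summing over the finitely many confidence values q attained). Then |E_{h,h'}[Dis_D(h,h')] − E_h[TestErr_D(h)]| ≤ CACE(h̃). -/
open MeasureTheory
open scoped ENNReal NNReal

/-!
Write `h̃_k(x) = μ {g | g x = k}`. Disagreement and test error are the complements of the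
agreement rate and the accuracy, which by Fubini are `E_D[∑_k h̃_k(X)²]` and `E_D[h̃_Y(X)]`.
As `h̃` takes finitely many values, grouping both integrals by the level sets `{h̃_k(X) = q}`
gives `accuracy - agreement = ∑_q q (∑_k P(Y = k, h̃_k(X) = q) - q ∑_k P(h̃_k(X) = q))`,
and each weight `q` is a probability, hence at most `1`.
-/

theorem lintegral_comp_eq_sum_mul_measure_preimage {α β : Type*} [MeasurableSpace α]
    [MeasurableSpace β] [MeasurableSingletonClass β] (ν : Measure α) {f : α → β}
    (hf : Measurable f) (g : β → ℝ≥0∞) (Q : Finset β) (hQ : ∀ a, f a ∈ Q) :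
    ∫⁻ a, g (f a) ∂ν = ∑ q ∈ Q, g q * ν (f ⁻¹' {q}) := by
  classical
  have hsplit : ∀ a, g (f a) = ∑ q ∈ Q, (f ⁻¹' {q}).indicator (fun _ => g q) a :=
    fun a => by simp [Set.indicator_apply, hQ a]
  simp_rw [hsplit]
  have hfiber : ∀ q, MeasurableSet (f ⁻¹' {q}) := fun q => hf (measurableSet_singleton q)
  rw [lintegral_finsetSum _ fun q _ => measurable_const.indicator (hfiber q)]
  exact Finset.sum_congr rfl fun q _ => lintegral_indicator_const (hfiber q) _

theorem prod_setOf_eq_eq_sum {α β ι : Type*} [MeasurableSpace α] [MeasurableSpace β]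
    [Fintype ι] [MeasurableSpace ι] [MeasurableSingletonClass ι]
    (μ : Measure α) (ν : Measure β) [SFinite ν] {f : α → ι} {f' : β → ι}
    (hf : Measurable f) (hf' : Measurable f') :
    (μ.prod ν) {w | f w.1 = f' w.2} = ∑ k, μ {a | f a = k} * ν {b | f' b = k} := by
  have hunion : {w : α × β | f w.1 = f' w.2} = ⋃ k, {a | f a = k} ×ˢ {b | f' b = k} := by
    ext w
    simp [eq_comm]
  rw [hunion, measure_iUnion, tsum_fintype]
  · exact Finset.sum_congr rfl fun k _ => Measure.prod_prod _ _
  · intro i j hij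
    exact Set.disjoint_left.2 fun w hi hj => hij (hi.1.symm.trans hj.1)
  · exact fun k => (hf (measurableSet_singleton k)).prod (hf' (measurableSet_singleton k))

theorem ENNReal.toReal_sum_mul_sum {β ι : Type*} [Fintype ι] (Q : Finset β)
    (c : β → ℝ≥0∞) (m : β → ι → ℝ≥0∞) (hc : ∀ q ∈ Q, c q ≠ ∞) (hm : ∀ q k, m q k ≠ ∞) :
    (∑ q ∈ Q, c q * ∑ k, m q k).toReal =
      ∑ q ∈ Q, (c q).toReal * ∑ k, (m q k).toReal := by
  rw [ENNReal.toReal_sum fun q hq =>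
    ENNReal.mul_ne_top (hc q hq) (ENNReal.sum_ne_top.2 fun k _ => hm q k)]
  refine Finset.sum_congr rfl fun q _ => ?_
  rw [ENNReal.toReal_mul, ENNReal.toReal_sum fun k _ => hm q k]

theorem abs_sum_mul_sub_sum_sq_mul_le {β : Type*} (Q : Finset β) (t a b : β → ℝ)
    (ht : ∀ q ∈ Q, 0 ≤ t q ∧ t q ≤ 1) :
    |∑ q ∈ Q, t q * a q - ∑ q ∈ Q, t q ^ 2 * b q| ≤ ∑ q ∈ Q, |a q - t q * b q| := by
  have hfactor : ∑ q ∈ Q, t q * a q - ∑ q ∈ Q, t q ^ 2 * b q =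
      ∑ q ∈ Q, t q * (a q - t q * b q) := by
    rw [← Finset.sum_sub_distrib]
    exact Finset.sum_congr rfl fun q _ => by ring
  rw [hfactor]
  refine (Finset.abs_sum_le_sum_abs _ _).trans (Finset.sum_le_sum fun q hq => ?_)
  rw [abs_mul, abs_of_nonneg (ht q hq).1]
  exact mul_le_of_le_one_left (abs_nonneg _) (ht q hq).2

section Ensemble

variable {𝓗 X ι : Type*} [MeasurableSpace 𝓗] [MeasurableSpace X] [MeasurableSpace ι]
  [MeasurableSingletonClass ι] {F : 𝓗 → X → ι} (μ : Measure 𝓗) [SFinite μ]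

theorem measurable_measure_setOf_apply_eq (hF : Measurable fun p : 𝓗 × X => F p.1 p.2)
    (k : ι) : Measurable fun x => μ {g | F g x = k} :=
  measurable_measure_prodMk_right (hF (measurableSet_singleton k))

variable [Fintype ι]

theorem measurableSet_setOf_apply_eq_snd (hF : Measurable fun p : 𝓗 × X => F p.1 p.2) :
    MeasurableSet {s : 𝓗 × X × ι | F s.1 s.2.1 = s.2.2} :=
  measurableSet_eq_fun (hF.comp (measurable_fst.prodMk (measurable_fst.comp measurable_snd)))
    (measurable_snd.comp measurable_snd)

theorem measurableSet_setOf_apply_eq_apply (hF : Measurable fun p : 𝓗 × X => F p.1 p.2) :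
    MeasurableSet {s : (𝓗 × 𝓗) × X × ι | F s.1.1 s.2.1 = F s.1.2 s.2.1} :=
  measurableSet_eq_fun
    (hF.comp ((measurable_fst.comp measurable_fst).prodMk (measurable_fst.comp measurable_snd)))
    (hF.comp ((measurable_snd.comp measurable_fst).prodMk (measurable_fst.comp measurable_snd)))

variable (D : Measure (X × ι))

theorem prod_setOf_apply_eq_snd [SFinite D] (hF : Measurable fun p : 𝓗 × X => F p.1 p.2) :
    (μ.prod D) {s | F s.1 s.2.1 = s.2.2} =
      ∑ k, ∫⁻ z in {z | z.2 = k}, μ {g | F g z.1 = k} ∂D := by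
  have hfiber : ∀ k : ι, MeasurableSet {z : X × ι | z.2 = k} :=
    fun k => measurable_snd (measurableSet_singleton k)
  have hcover : (⋃ k, {z : X × ι | z.2 = k}) = Set.univ :=
    Set.iUnion_eq_univ_iff.2 fun z => ⟨z.2, rfl⟩
  calc (μ.prod D) {s | F s.1 s.2.1 = s.2.2}
      = ∫⁻ z in ⋃ k, {z : X × ι | z.2 = k}, μ {g | F g z.1 = z.2} ∂D := by
        rw [hcover, Measure.restrict_univ,
          Measure.prod_apply_symm (measurableSet_setOf_apply_eq_snd hF)]
        rfl
    _ = ∑ k, ∫⁻ z in {z | z.2 = k}, μ {g | F g z.1 = z.2} ∂D := by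
        rw [lintegral_iUnion hfiber, tsum_fintype]
        exact fun i j hij => Set.disjoint_left.2 fun z hi hj => hij (hi.symm.trans hj)
    _ = ∑ k, ∫⁻ z in {z | z.2 = k}, μ {g | F g z.1 = k} ∂D :=
        Finset.sum_congr rfl fun k _ => setLIntegral_congr_fun (hfiber k) fun z hz => by
          rw [show z.2 = k from hz]

theorem prod_prod_setOf_apply_eq_apply [SFinite D]
    (hF : Measurable fun p : 𝓗 × X => F p.1 p.2) :
    ((μ.prod μ).prod D) {s | F s.1.1 s.2.1 = F s.1.2 s.2.1} =
      ∑ k, ∫⁻ z, μ {g | F g z.1 = k} ^ 2 ∂D := by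
  have hF' : ∀ x, Measurable fun g => F g x := fun x => hF.comp measurable_prodMk_right
  have hsq : ∀ k, Measurable fun z : X × ι => μ {g | F g z.1 = k} ^ 2 :=
    fun k => ((measurable_measure_setOf_apply_eq μ hF k).comp measurable_fst).pow_const 2
  rw [Measure.prod_apply_symm (measurableSet_setOf_apply_eq_apply hF),
    ← lintegral_finsetSum _ fun k _ => hsq k]
  refine lintegral_congr fun z => ?_
  simp_rw [sq]
  exact prod_setOf_eq_eq_sum μ μ (hF' z.1) (hF' z.1)

variable [IsFiniteMeasure D] (Q : Finset ℝ≥0∞)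

theorem measureReal_prod_setOf_apply_eq_snd (hF : Measurable fun p : 𝓗 × X => F p.1 p.2)
    (hQ : ∀ x k, μ {g | F g x = k} ∈ Q) (hQ_top : ∀ q ∈ Q, q ≠ ∞) :
    (μ.prod D).real {s | F s.1 s.2.1 = s.2.2} =
      ∑ q ∈ Q, q.toReal * ∑ k, D.real {p | p.2 = k ∧ μ {g | F g p.1 = k} = q} := by
  have hconf : ∀ k, Measurable fun z : X × ι => μ {g | F g z.1 = k} :=
    fun k => (measurable_measure_setOf_apply_eq μ hF k).comp measurable_fst
  have hfiber : ∀ k, ∫⁻ z in {z | z.2 = k}, μ {g | F g z.1 = k} ∂D =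
      ∑ q ∈ Q, q * D {p | p.2 = k ∧ μ {g | F g p.1 = k} = q} := by
    intro k
    refine (lintegral_comp_eq_sum_mul_measure_preimage _ (hconf k) id Q fun z => hQ z.1 k).trans
      (Finset.sum_congr rfl fun q _ => ?_)
    rw [id, Measure.restrict_apply (hconf k (measurableSet_singleton q)), Set.inter_comm]
    rfl
  rw [measureReal_def, prod_setOf_apply_eq_snd μ D hF, Finset.sum_congr rfl fun k _ => hfiber k,
    Finset.sum_comm]
  simp_rw [← Finset.mul_sum]
  exact ENNReal.toReal_sum_mul_sum Q id _ hQ_top fun _ _ => measure_ne_top _ _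

theorem measureReal_prod_prod_setOf_apply_eq_apply
    (hF : Measurable fun p : 𝓗 × X => F p.1 p.2) (hQ : ∀ x k, μ {g | F g x = k} ∈ Q)
    (hQ_top : ∀ q ∈ Q, q ≠ ∞) :
    ((μ.prod μ).prod D).real {s | F s.1.1 s.2.1 = F s.1.2 s.2.1} =
      ∑ q ∈ Q, q.toReal ^ 2 * ∑ k, D.real {p | μ {g | F g p.1 = k} = q} := by
  have hconf : ∀ k, Measurable fun z : X × ι => μ {g | F g z.1 = k} :=
    fun k => (measurable_measure_setOf_apply_eq μ hF k).comp measurable_fst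
  rw [measureReal_def, prod_prod_setOf_apply_eq_apply μ D hF]
  rw [Finset.sum_congr rfl fun k _ => lintegral_comp_eq_sum_mul_measure_preimage D (hconf k)
    (· ^ 2) Q fun z => hQ z.1 k, Finset.sum_comm]
  simp_rw [← Finset.mul_sum, ← ENNReal.toReal_pow]
  exact ENNReal.toReal_sum_mul_sum Q (· ^ 2) _
    (fun q hq => ENNReal.pow_ne_top (hQ_top q hq)) fun _ _ => measure_ne_top _ _

end Ensemble

theorem stmt_7_general {𝓗 X : Type*} [MeasurableSpace 𝓗] [MeasurableSpace X] (K : ℕ)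
    (μ : Measure 𝓗) [IsProbabilityMeasure μ]
    (D : Measure (X × Fin K)) [IsProbabilityMeasure D]
    (F : 𝓗 → X → Fin K) (hF : Measurable fun p : 𝓗 × X => F p.1 p.2)
    (Q : Finset ℝ≥0∞) (hQ : ∀ (x : X) (k : Fin K), μ {g | F g x = k} ∈ Q) :
    |(((μ.prod μ).prod D)
          {s : (𝓗 × 𝓗) × X × Fin K | F s.1.1 s.2.1 ≠ F s.1.2 s.2.1}).toReal -
        ((μ.prod D) {s : 𝓗 × X × Fin K | F s.1 s.2.1 ≠ s.2.2}).toReal| ≤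
      ∑ q ∈ Q,
        |(∑ k : Fin K, (D {p : X × Fin K | p.2 = k ∧ μ {g | F g p.1 = k} = q}).toReal) -
          q.toReal * ∑ k : Fin K, (D {p : X × Fin K | μ {g | F g p.1 = k} = q}).toReal| := by
  -- Confidences are probabilities, so only the values `q ≤ 1` of `Q` are attained.
  have hQ₁ : ∀ x k, μ {g | F g x = k} ∈ Q.filter (· ≤ 1) :=
    fun x k => Finset.mem_filter.2 ⟨hQ x k, prob_le_one⟩
  have hQ₁_top : ∀ q ∈ Q.filter (· ≤ 1), q ≠ ∞ :=
    fun q hq => ne_top_of_le_ne_top ENNReal.one_ne_top (Finset.mem_filter.1 hq).2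
  simp only [← measureReal_def, ne_eq, ← Set.compl_ofPred]
  rw [probReal_compl_eq_one_sub (measurableSet_setOf_apply_eq_apply hF),
    probReal_compl_eq_one_sub (measurableSet_setOf_apply_eq_snd hF), sub_sub_sub_cancel_left,
    measureReal_prod_setOf_apply_eq_snd μ D _ hF hQ₁ hQ₁_top,
    measureReal_prod_prod_setOf_apply_eq_apply μ D _ hF hQ₁ hQ₁_top]
  refine (abs_sum_mul_sub_sum_sq_mul_le _ _ _ _ fun q hq => ⟨ENNReal.toReal_nonneg, ?_⟩).trans
    (Finset.sum_le_sum_of_subset_of_nonneg (Finset.filter_subset _ _) fun _ _ _ => abs_nonneg _)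
  exact ENNReal.toReal_le_of_le_ofReal zero_le_one (by simpa using (Finset.mem_filter.1 hq).2)

/-- Deviation from calibration bounds the deviation from the Generalization Disagreement
Equality: the absolute gap between the expected disagreement rate and the expected test
error is at most the class-aggregated calibration error
`CACE = ∑_q |∑_k P(Y = k, h̃_k(X) = q) − q · ∑_k P(h̃_k(X) = q)|`, where the sum ranges over
the (finitely many) confidence values attained. -/
theorem stmt_7 {𝓗 X : Type*} [MeasurableSpace 𝓗] [MeasurableSpace X] (K : ℕ)
    (μ : Measure 𝓗) [IsProbabilityMeasure μ]
    (D : Measure (X × Fin K)) [IsProbabilityMeasure D]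
    (F : 𝓗 → X → Fin K) (hF : Measurable fun p : 𝓗 × X => F p.1 p.2)
    (Q : Finset ℝ≥0∞) (hQ : ∀ (x : X) (k : Fin K), μ {g | F g x = k} ∈ Q)
    (hmeas : ∀ (q : ℝ≥0∞) (k : Fin K), MeasurableSet {x : X | μ {g | F g x = k} = q}) :
    |(((μ.prod μ).prod D)
          {s : (𝓗 × 𝓗) × X × Fin K | F s.1.1 s.2.1 ≠ F s.1.2 s.2.1}).toReal -
        ((μ.prod D) {s : 𝓗 × X × Fin K | F s.1 s.2.1 ≠ s.2.2}).toReal| ≤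
      ∑ q ∈ Q,
        |(∑ k : Fin K, (D {p : X × Fin K | p.2 = k ∧ μ {g | F g p.1 = k} = q}).toReal) -
          q.toReal * ∑ k : Fin K, (D {p : X × Fin K | μ {g | F g p.1 = k} = q}).toReal| :=
  stmt_7_general K μ D F hF Q hQ
end

section
/- Failure of uniform convergence in an abstract setup: let D be a distribution on ℝ^N that is symmetric under negation (x ↦ −x preserves D) and atomless. Given h* : ℝ^N → {−1,+1}, define the learner that on sample set S outputs h_S with h_S(x) = −h*(x) if x ∈ {−x' : x' ∈ S} and h_S(x) = h*(x) otherwise. Then: (a) for almost every S ∼ D^m, h_S agrees with h* D-almost everywhere, so the generalization gap of the algorithm is 0; yet (b) for every δ < 1/2 and every collection S_δ of sample sets with P_{S∼D^m}[S ∈ S_δ] ≥ 1−δ, there exists S* ∈ S_δ whose negation S*' = {−x : x ∈ S*} also lies in S_δ and on which h_{S*} has empirical 0-1 error 1 (relative to h* as ground truth labels). Hence the tightest algorithm-dependent uniform convergence bound ε_unif-alg(m, δ) equals 1. -/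
/-!
A sample is a finite set, hence `D`-null because `D` has no atoms, so `h_S = h*` almost
everywhere. Negating every sample point preserves `D^m` by the symmetry of `D`, so `S_δ` and
its preimage under negation each miss mass at most `δ < 1/2`; they therefore intersect, and on
any `S` in the intersection `h_S` flips the `±1`-valued label `h*` at every point of `-S`.
-/

open MeasureTheory
open scoped ENNReal NNReal

namespace MeasureTheory

variable {α β : Type*} [MeasurableSpace α] {μ : Measure α}

lemma measure_setOf_ne_eq_zero_of_finite [NullSingletonClass μ] {f g : α → β} {s : Set α}
    (hs : s.Finite) (hfg : ∀ x ∉ s, f x = g x) : μ {x | f x ≠ g x} = 0 :=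
  measure_mono_null (fun x hx => by_contra fun h => hx (hfg x h)) (hs.measure_zero μ)

lemma prob_compl_le_of_one_sub_le [IsProbabilityMeasure μ] {s : Set α} {δ : ℝ≥0∞}
    (hs : MeasurableSet s) (h : 1 - δ ≤ μ s) : μ sᶜ ≤ δ := by
  rw [prob_compl_eq_one_sub hs]
  exact tsub_le_iff_tsub_le.mp h

lemma nonempty_inter_of_measure_compl_add_lt_one [IsProbabilityMeasure μ] {s t : Set α}
    (h : μ sᶜ + μ tᶜ < 1) : (s ∩ t).Nonempty := by
  by_contra hst
  have hcover : (Set.univ : Set α) ⊆ sᶜ ∪ tᶜ := by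
    rw [← Set.compl_inter, Set.not_nonempty_iff_eq_empty.mp hst, Set.compl_empty]
  have : (1 : ℝ≥0∞) ≤ μ sᶜ + μ tᶜ := calc
    1 = μ Set.univ := measure_univ.symm
    _ ≤ μ (sᶜ ∪ tᶜ) := measure_mono hcover
    _ ≤ μ sᶜ + μ tᶜ := measure_union_le _ _
  exact this.not_gt h

lemma MeasurePreserving.exists_mem_and_apply_mem [IsProbabilityMeasure μ] {f : α → α}
    (hf : MeasurePreserving f μ μ) {s : Set α} (hs : MeasurableSet s) {δ : ℝ≥0∞}
    (hδ : δ < 1 / 2) (h : 1 - δ ≤ μ s) : ∃ x ∈ s, f x ∈ s := by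
  have hs_compl : μ sᶜ ≤ δ := prob_compl_le_of_one_sub_le hs h
  have hfs_compl : μ (f ⁻¹' s)ᶜ ≤ δ := by
    rwa [← Set.preimage_compl, hf.measure_preimage hs.compl.nullMeasurableSet]
  exact nonempty_inter_of_measure_compl_add_lt_one <| calc
    μ sᶜ + μ (f ⁻¹' s)ᶜ ≤ δ + δ := add_le_add hs_compl hfs_compl
    _ < 1 / 2 + 1 / 2 := ENNReal.add_lt_add hδ hδ
    _ = 1 := ENNReal.add_halves 1

end MeasureTheory

/-- Failure of uniform convergence in an abstract setup. Let `D` be an atomless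
distribution on `ℝ^N` that is symmetric under negation, labels given by
`h* : ℝ^N → {−1, +1}`, and let the learner output `h_S` which flips the label of `h*`
exactly on the negations of the sample points. Then: (a) for every sample `S`, `h_S`
agrees with `h*` `D`-almost everywhere (so the generalization gap is `0`); yet (b) for
every `δ < 1/2` and every collection `S_δ` of sample sets of probability at least `1 − δ`,
there exists `S* ∈ S_δ` whose negation also lies in `S_δ` and on which `h_{S*}`
misclassifies every point of the negated sample (empirical 0-1 error `1`). -/
theorem stmt_14 (N m : ℕ) (D : Measure (Fin N → ℝ)) [IsProbabilityMeasure D]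
    [NullSingletonClass D] (hsymm : Measure.map (fun x : Fin N → ℝ => -x) D = D)
    (hstar : (Fin N → ℝ) → ℝ) (hpm : ∀ x, hstar x = 1 ∨ hstar x = -1)
    (hS : (Fin m → Fin N → ℝ) → (Fin N → ℝ) → ℝ)
    (hdef_flip : ∀ S x, (∃ i, x = -(S i)) → hS S x = -hstar x)
    (hdef_keep : ∀ S x, ¬(∃ i, x = -(S i)) → hS S x = hstar x) :
    (∀ S, D {x | hS S x ≠ hstar x} = 0) ∧
    (∀ δ : ℝ≥0∞, δ < 1 / 2 →
      ∀ Sδ : Set (Fin m → Fin N → ℝ), MeasurableSet Sδ →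
        1 - δ ≤ (Measure.pi fun _ : Fin m => D) Sδ →
        ∃ S ∈ Sδ, (fun i => -(S i)) ∈ Sδ ∧ ∀ i, hS S (-(S i)) ≠ hstar (-(S i))) := by
  have hflip_ne : ∀ x, -hstar x ≠ hstar x := fun x => by
    rcases hpm x with h | h <;> norm_num [h]
  refine ⟨fun S => ?_, fun δ hδ Sδ hmeas hP => ?_⟩
  · exact measure_setOf_ne_eq_zero_of_finite (Set.finite_range fun i => -(S i))
      fun x hx => hdef_keep S x (by simpa [eq_comm] using hx)
  · have hneg : MeasurePreserving (fun (S : Fin m → Fin N → ℝ) i => -(S i))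
        (Measure.pi fun _ => D) (Measure.pi fun _ => D) :=
      measurePreserving_pi _ _ fun _ => ⟨measurable_neg, hsymm⟩
    obtain ⟨S, hS_mem, hnegS_mem⟩ := hneg.exists_mem_and_apply_mem hmeas hδ hP
    exact ⟨S, hS_mem, hnegS_mem, fun i => by
      rw [hdef_flip S _ ⟨i, rfl⟩]
      exact hflip_ne _⟩
end

section
/- Two-sided from KL PAC-Bayes (arithmetic core): for a, b ∈ [0,1] with a > e^{3/2} b and b < 1, the binary KL divergence KL(a‖b) = a ln(a/b) + (1−a) ln((1−a)/(1−b)) satisfies KL(a‖b) ≥ (a − b)/2. Consequently, if KL(a‖b) ≤ ε then a − b ≤ 2ε whenever a > e^{3/2} b. -/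
/-!
The first term of `KL(a‖b)` is at least `(3/2) a` because `a / b > e^{3/2}`, and the second is at
least `b - a` by `log x ≥ 1 - x⁻¹`; their sum `a / 2 + b` exceeds `(a - b) / 2`.
-/

open Real

lemma sub_le_mul_log_div {x y : ℝ} (hx : 0 ≤ x) (hy : 0 < y) : x - y ≤ x * log (x / y) := by
  rcases hx.eq_or_lt with rfl | hx
  · simp [hy.le]
  calc x - y = x * (1 - (x / y)⁻¹) := by field_simp
    _ ≤ x * log (x / y) :=
      mul_le_mul_of_nonneg_left (one_sub_inv_le_log_of_pos (div_pos hx hy)) hx.le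

lemma mul_le_mul_log_div_of_exp_mul_le {c x y : ℝ} (hy : 0 < y) (h : exp c * y ≤ x) :
    c * x ≤ x * log (x / y) := by
  have hx : 0 < x := (mul_pos (exp_pos c) hy).trans_le h
  have hc : c ≤ log (x / y) := by
    rwa [le_log_iff_exp_le (div_pos hx hy), le_div_iff₀ hy]
  rw [mul_comm]
  exact mul_le_mul_of_nonneg_left hc hx.le

theorem stmt_19_general (a b : ℝ) (ha1 : a ≤ 1) (hb0 : 0 < b) (hb1 : b < 1)
    (hab : Real.exp (3 / 2) * b < a) :
    (a - b) / 2 ≤ a * Real.log (a / b) + (1 - a) * Real.log ((1 - a) / (1 - b)) ∧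
    ∀ ε : ℝ, a * Real.log (a / b) + (1 - a) * Real.log ((1 - a) / (1 - b)) ≤ ε →
      a - b ≤ 2 * ε := by
  have hfirst := mul_le_mul_log_div_of_exp_mul_le hb0 hab.le
  have hsecond := sub_le_mul_log_div (sub_nonneg.2 ha1) (sub_pos.2 hb1)
  have hkl : (a - b) / 2 ≤ a * log (a / b) + (1 - a) * log ((1 - a) / (1 - b)) := by
    linarith
  exact ⟨hkl, fun ε hε => by linarith⟩

/-- Arithmetic core of the two-sidedness of KL PAC-Bayes bounds: for `a, b ∈ [0,1]` with
`a > e^{3/2}·b`, `0 < b` and `b < 1`, the binary KL divergence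
`KL(a‖b) = a ln(a/b) + (1−a) ln((1−a)/(1−b))` satisfies `KL(a‖b) ≥ (a − b)/2`;
consequently `KL(a‖b) ≤ ε` implies `a − b ≤ 2ε`. -/
theorem stmt_19 (a b : ℝ) (ha0 : 0 ≤ a) (ha1 : a ≤ 1) (hb0 : 0 < b) (hb1 : b < 1)
    (hab : Real.exp (3 / 2) * b < a) :
    (a - b) / 2 ≤ a * Real.log (a / b) + (1 - a) * Real.log ((1 - a) / (1 - b)) ∧
    ∀ ε : ℝ, a * Real.log (a / b) + (1 - a) * Real.log ((1 - a) / (1 - b)) ≤ ε →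
      a - b ≤ 2 * ε :=
  stmt_19_general a b ha1 hb0 hb1 hab
end
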